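/- Let D be a chord diagram containing a strong RII pair α = {i, j+1}, β = {i+1, j} (where i, i+1, j, j+1 are distinct points in this cyclic order), let D' be obtained from D by deleting α and β, and let k be the number of chords of D crossing α. Then H(D) ≡ H(D') + k (mod 2); in particular, if D is evenly interlaced then H(D) ≡ H(D') (mod 2). (This is the paper's claim that one strong RII move changes the H-chord count by an even number.) -/

import Mathlib

/-- A chord diagram on `2 * n` points: a fixed-point-free involution of `ZMod (2 * n)`.
Its two-element orbits are called chords; the points lie on a circle in their
natural cyclic order. -/
structure ChordDiagram (n : ℕ) where
  inv : ZMod (2 * n) → ZMod (2 * n)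
  involutive : Function.Involutive inv
  fixedPointFree : ∀ x, inv x ≠ x

/-- A chord: an unordered pair of points of the circle `ZMod m`. -/
abbrev Chord (m : ℕ) := Sym2 (ZMod m)

/-- `x` lies in the open cyclic arc running counterclockwise from `a` to `b`. -/
def InArc {m : ℕ} (a b x : ZMod m) : Prop :=
  0 < (x - a).val ∧ (x - a).val < (b - a).val

/-- Two chords cross: exactly one endpoint of the second lies in the open cyclic arc
bounded by the first. -/
def Chord.Crosses {m : ℕ} (e f : Chord m) : Prop :=
  ∃ a b c d : ZMod m, e = s(a, b) ∧ f = s(c, d) ∧ Xor' (InArc a b c) (InArc a b d)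

/-- The set of chords of a chord diagram. -/
def ChordDiagram.chords {n : ℕ} (D : ChordDiagram n) : Set (Chord (2 * n)) :=
  {e | ∃ x, e = s(x, D.inv x)}

/-- `P` is an (unordered) pair of crossing chords of `D`. -/
def ChordDiagram.IsCrossingPair {n : ℕ} (D : ChordDiagram n)
    (P : Finset (Chord (2 * n))) : Prop :=
  P.card = 2 ∧ (∀ e ∈ P, e ∈ D.chords) ∧
    ∀ e ∈ P, ∀ f ∈ P, e ≠ f → Chord.Crosses e f

/-- `P` is an (unordered) triple of pairwise crossing chords of `D`. -/
def ChordDiagram.IsTripleChord {n : ℕ} (D : ChordDiagram n)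
    (P : Finset (Chord (2 * n))) : Prop :=
  P.card = 3 ∧ (∀ e ∈ P, e ∈ D.chords) ∧
    ∀ e ∈ P, ∀ f ∈ P, e ≠ f → Chord.Crosses e f

/-- `P` is an H-triple of `D`: a triple `{a, b, c}` of chords of `D` such that `c`
crosses both `a` and `b` while `a` and `b` do not cross. -/
def ChordDiagram.IsHTriple {n : ℕ} (D : ChordDiagram n)
    (P : Finset (Chord (2 * n))) : Prop :=
  P.card = 3 ∧ (∀ e ∈ P, e ∈ D.chords) ∧
    ∃ c ∈ P, (∀ e ∈ P, e ≠ c → Chord.Crosses c e) ∧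
      ∀ a ∈ P, ∀ b ∈ P, a ≠ c → b ≠ c → a ≠ b → ¬ Chord.Crosses a b

/-- `X D`: the number of unordered pairs of chords of `D` that cross. -/
noncomputable def ChordDiagram.X {n : ℕ} (D : ChordDiagram n) : ℕ :=
  Set.ncard {P | D.IsCrossingPair P}

/-- `T D`: the number of unordered triples of chords of `D` that pairwise cross. -/
noncomputable def ChordDiagram.T {n : ℕ} (D : ChordDiagram n) : ℕ :=
  Set.ncard {P | D.IsTripleChord P}

/-- `H D`: the number of H-triples of `D`. -/
noncomputable def ChordDiagram.H {n : ℕ} (D : ChordDiagram n) : ℕ :=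
  Set.ncard {P | D.IsHTriple P}

/-- `D'` is obtained from `D` by deleting the set `S` of chords: deletion removes the
chords of `S` together with their endpoints and reindexes the remaining points
preserving their cyclic order; in particular it induces a bijection between the
remaining chords of `D` and the chords of `D'` preserving all crossing relations. -/
def ChordDiagram.DeletionOf {n n' : ℕ} (D : ChordDiagram n) (S : Set (Chord (2 * n)))
    (D' : ChordDiagram n') : Prop :=
  ∃ φ : {e : Chord (2 * n) // e ∈ D.chords ∧ e ∉ S} ≃
      {e : Chord (2 * n') // e ∈ D'.chords},
    ∀ e f, Chord.Crosses e.1 f.1 ↔ Chord.Crosses (φ e).1 (φ f).1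

/-- Four points occurring in this (strict counterclockwise) cyclic order;
in particular they are pairwise distinct. -/
def CyclicOrd4 {m : ℕ} (a b c d : ZMod m) : Prop :=
  0 < (b - a).val ∧ (b - a).val < (c - a).val ∧ (c - a).val < (d - a).val

/-- Six points occurring in this (strict counterclockwise) cyclic order;
in particular they are pairwise distinct. -/
def CyclicOrd6 {m : ℕ} (a b c d e f : ZMod m) : Prop :=
  0 < (b - a).val ∧ (b - a).val < (c - a).val ∧ (c - a).val < (d - a).val ∧
    (d - a).val < (e - a).val ∧ (e - a).val < (f - a).val

/-- `D` is evenly interlaced: every chord of `D` crosses an even number of chords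
of `D` (true for the Gauss diagram of every knot projection). -/
def ChordDiagram.EvenlyInterlaced {n : ℕ} (D : ChordDiagram n) : Prop :=
  ∀ e ∈ D.chords, Even (Set.ncard {f | f ∈ D.chords ∧ Chord.Crosses e f})

/-- Exactly two of the three propositions hold. -/
def ExactlyTwo (A B C : Prop) : Prop :=
  (A ∧ B ∧ ¬ C) ∨ (A ∧ ¬ B ∧ C) ∨ (¬ A ∧ B ∧ C)

/-- A strong RIII move: the three pairwise crossing chords `{p, q+1}`, `{q, r+1}`,
`{r, p+1}` (where `p, p+1, q, q+1, r, r+1` occur in this cyclic order) are replaced by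
the three chords `{p+1, q}`, `{q+1, r}`, `{r+1, p}`, all other chords being unchanged. -/
def ChordDiagram.StrongRIII {n : ℕ} (D D' : ChordDiagram n) : Prop :=
  ∃ p q r : ZMod (2 * n), CyclicOrd6 p (p + 1) q (q + 1) r (r + 1) ∧
    s(p, q + 1) ∈ D.chords ∧ s(q, r + 1) ∈ D.chords ∧ s(r, p + 1) ∈ D.chords ∧
    D'.chords = (D.chords \ {s(p, q + 1), s(q, r + 1), s(r, p + 1)}) ∪
      {s(p + 1, q), s(q + 1, r), s(r + 1, p)}

/-!
The chords `α = s(i, j+1)` and `β = s(i+1, j)` do not cross, and every other chord crosses `α`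
iff it crosses `β`, since the arcs cut out by `α` and `β` differ only at the four endpoints
`i, i+1, j, j+1`. Sort the H-triples of `D` by how many of `α, β` they contain. Those with
neither are the H-triples of `D'`. Exchanging `α` and `β` matches those containing only `α`
with those containing only `β`. In an H-triple containing both, `α` and `β` cannot be the
centre, so the third chord is the centre and crosses `α`, and every chord crossing `α` occurs
this way. Hence `H(D) = H(D') + 2 * (…) + k`.

All cyclic-order facts reduce, via `ZMod.val_sub_add_val_sub`, to linear arithmetic on the
representatives `(x - a).val ∈ [0, m)`.
-/

namespace ZMod

variable {m : ℕ} [NeZero m]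

theorem val_sub_add_val_sub (x a b : ZMod m) :
    (x - b).val + (b - a).val = (x - a).val ∨ (x - b).val + (b - a).val = (x - a).val + m := by
  have h := sub_add_sub_cancel x b a
  rcases lt_or_ge ((x - b).val + (b - a).val) m with hlt | hge
  · exact .inl (h ▸ (val_add_of_lt hlt).symm)
  · exact .inr (h ▸ val_add_val_of_le hge)

omit [NeZero m] in
theorem val_sub_pos {x a : ZMod m} : 0 < (x - a).val ↔ x ≠ a :=
  val_pos.trans sub_ne_zero

theorem val_sub_ne_val_sub {x y : ZMod m} (a : ZMod m) (h : x ≠ y) :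
    (x - a).val ≠ (y - a).val :=
  fun hv => h (sub_left_injective (val_injective m hv))

end ZMod

open ZMod

section Arcs

variable {m : ℕ} [NeZero m] {a b c d x : ZMod m}

theorem inArc_iff_not_inArc_swap (hab : a ≠ b) (hxa : x ≠ a) (hxb : x ≠ b) :
    InArc a b x ↔ ¬ InArc b a x := by
  have hx := val_sub_add_val_sub x a b
  have ha := val_sub_add_val_sub a a b
  rw [sub_self, val_zero] at ha
  have := val_sub_pos.2 hab
  have := val_sub_pos.2 hab.symm
  have := val_sub_pos.2 hxa
  have := val_sub_ne_val_sub a hxb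
  have := (x - a).val_lt
  have := (x - b).val_lt
  unfold InArc
  omega

theorem Chord.crosses_mk_iff (hab : a ≠ b) (hca : c ≠ a) (hcb : c ≠ b) (hda : d ≠ a)
    (hdb : d ≠ b) : Chord.Crosses s(a, b) s(c, d) ↔ Xor (InArc a b c) (InArc a b d) := by
  refine ⟨?_, fun h => ⟨a, b, c, d, rfl, rfl, h⟩⟩
  rintro ⟨a', b', c', d', he, hf, h⟩
  have h : Xor (InArc a' b' c') (InArc a' b' d') := h
  have hswap : Xor (InArc b a c) (InArc b a d) ↔ Xor (InArc a b c) (InArc a b d) := by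
    rw [inArc_iff_not_inArc_swap hab.symm hcb hca, inArc_iff_not_inArc_swap hab.symm hdb hda,
      xor_not_not]
  rcases Sym2.eq_iff.mp he with ⟨ha, hb⟩ | ⟨ha, hb⟩ <;>
    rcases Sym2.eq_iff.mp hf with ⟨hc, hd⟩ | ⟨hc, hd⟩ <;> subst a' b' c' d'
  · exact h
  · exact xor_comm .. ▸ h
  · exact hswap.1 h
  · exact hswap.1 (xor_comm .. ▸ h)

theorem Chord.crosses_mk_comm (hab : a ≠ b) (hcd : c ≠ d) (hca : c ≠ a) (hcb : c ≠ b)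
    (hda : d ≠ a) (hdb : d ≠ b) :
    Chord.Crosses s(a, b) s(c, d) ↔ Chord.Crosses s(c, d) s(a, b) := by
  rw [crosses_mk_iff hab hca hcb hda hdb,
    crosses_mk_iff hcd hca.symm hda.symm hcb.symm hdb.symm]
  have := val_sub_add_val_sub a a c
  have := val_sub_add_val_sub b a c
  have := val_sub_add_val_sub d a c
  have := val_sub_pos.2 hab.symm
  have := val_sub_pos.2 hca
  have := val_sub_pos.2 hca.symm
  have := val_sub_pos.2 hda
  have := val_sub_ne_val_sub a hcb
  have := val_sub_ne_val_sub a hdb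
  have := val_sub_ne_val_sub a hcd
  have := (b - a).val_lt
  have := (c - a).val_lt
  have := (d - a).val_lt
  have := (a - c).val_lt
  have := (b - c).val_lt
  have := (d - c).val_lt
  rw [sub_self, val_zero] at *
  unfold Xor InArc
  omega

omit [NeZero m] in
theorem Chord.not_crosses_self (e : Chord m) : ¬ Chord.Crosses e e := by
  rintro ⟨a, b, c, d, rfl, hf, h⟩
  have h : Xor (InArc a b c) (InArc a b d) := h
  rcases Sym2.eq_iff.mp hf with ⟨rfl, rfl⟩ | ⟨rfl, rfl⟩ <;> simp [Xor, InArc] at h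

omit [NeZero m] in
theorem CyclicOrd4.ne (h : CyclicOrd4 a b c d) :
    b ≠ a ∧ c ≠ a ∧ d ≠ a ∧ c ≠ b ∧ d ≠ b ∧ d ≠ c := by
  obtain ⟨hb, hbc, hcd⟩ := h
  refine ⟨val_sub_pos.1 hb, val_sub_pos.1 (by omega), val_sub_pos.1 (by omega), ?_, ?_, ?_⟩ <;>
    rintro rfl <;> omega

theorem CyclicOrd4.not_crosses (h : CyclicOrd4 a b c d) : ¬ Chord.Crosses s(a, d) s(b, c) := by
  obtain ⟨hba, hca, hda, hcb, hdb, hdc⟩ := h.ne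
  rw [Chord.crosses_mk_iff hda.symm hba hdb.symm hca hdc.symm]
  unfold CyclicOrd4 at h
  unfold Xor InArc
  omega

end Arcs

section StrongRII

variable {m : ℕ} [NeZero m] {i j : ZMod m}

theorem CyclicOrd4.inArc_iff_inArc (hord : CyclicOrd4 i (i + 1) j (j + 1)) {x : ZMod m}
    (hx : x ∉ ({i, i + 1, j, j + 1} : Set (ZMod m))) :
    InArc i (j + 1) x ↔ InArc (i + 1) j x := by
  simp only [Set.mem_insert_iff, Set.mem_singleton_iff, not_or] at hx
  obtain ⟨hxi, hxi1, hxj, hxj1⟩ := hx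
  obtain ⟨h1, hj, hj1⟩ := hord
  have hone : (1 : ZMod m).val = 1 := by
    rw [add_sub_cancel_left, val_one_eq_one_mod] at h1
    rw [val_one_eq_one_mod]
    have := Nat.mod_le 1 m
    omega
  have hx := val_sub_add_val_sub x i (i + 1)
  have hj' := val_sub_add_val_sub j i (i + 1)
  have hj1' := val_sub_add_val_sub (j + 1) i j
  have := val_sub_pos.2 hxi
  have := val_sub_ne_val_sub i hxi1
  have := val_sub_ne_val_sub i hxj
  have := val_sub_ne_val_sub i hxj1
  have := (x - i).val_lt
  have := (j + 1 - i).val_lt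
  have := (x - (i + 1)).val_lt
  have := (j - (i + 1)).val_lt
  simp only [add_sub_cancel_left] at *
  unfold InArc
  omega

theorem CyclicOrd4.crosses_iff_crosses (hord : CyclicOrd4 i (i + 1) j (j + 1)) {e : Chord m}
    (he : ∀ x ∈ e, x ∉ ({i, i + 1, j, j + 1} : Set (ZMod m))) :
    Chord.Crosses s(i, j + 1) e ↔ Chord.Crosses s(i + 1, j) e := by
  induction e using Sym2.ind with
  | _ c d =>
    have hc := he c (Sym2.mem_mk_left c d)
    have hd := he d (Sym2.mem_mk_right c d)
    obtain ⟨-, -, hj1i, hji1, -, -⟩ := hord.ne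
    simp only [Set.mem_insert_iff, Set.mem_singleton_iff, not_or] at hc hd
    rw [Chord.crosses_mk_iff hj1i.symm hc.1 hc.2.2.2 hd.1 hd.2.2.2,
      Chord.crosses_mk_iff hji1.symm hc.2.1 hc.2.2.1 hd.2.1 hd.2.2.1,
      hord.inArc_iff_inArc (he c (Sym2.mem_mk_left c d)),
      hord.inArc_iff_inArc (he d (Sym2.mem_mk_right c d))]

end StrongRII

namespace ChordDiagram

variable {n n' : ℕ} {D : ChordDiagram n} {D' : ChordDiagram n'} {e f : Chord (2 * n)}

theorem eq_mk_inv_of_mem (he : e ∈ D.chords) {x : ZMod (2 * n)} (hx : x ∈ e) :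
    e = s(x, D.inv x) := by
  obtain ⟨y, rfl⟩ := he
  rcases Sym2.mem_iff.mp hx with rfl | rfl
  · rfl
  · rw [D.involutive y, Sym2.eq_swap]

theorem eq_of_mem_of_mem (he : e ∈ D.chords) (hf : f ∈ D.chords) {x : ZMod (2 * n)}
    (hxe : x ∈ e) (hxf : x ∈ f) : e = f := by
  rw [eq_mk_inv_of_mem he hxe, eq_mk_inv_of_mem hf hxf]

theorem crosses_comm [NeZero (2 * n)] (he : e ∈ D.chords) (hf : f ∈ D.chords) :
    Chord.Crosses e f ↔ Chord.Crosses f e := by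
  by_cases hef : e = f
  · rw [hef]
  have hdisj : ∀ x ∈ e, x ∉ f := fun x hxe hxf => hef (eq_of_mem_of_mem he hf hxe hxf)
  obtain ⟨x, rfl⟩ := he
  obtain ⟨y, rfl⟩ := hf
  exact Chord.crosses_mk_comm (D.fixedPointFree x).symm (D.fixedPointFree y).symm
    (fun h => hdisj x (Sym2.mem_mk_left _ _) (h ▸ Sym2.mem_mk_left _ _))
    (fun h => hdisj _ (Sym2.mem_mk_right _ _) (h ▸ Sym2.mem_mk_left _ _))
    (fun h => hdisj x (Sym2.mem_mk_left _ _) (h ▸ Sym2.mem_mk_right _ _))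
    (fun h => hdisj _ (Sym2.mem_mk_right _ _) (h ▸ Sym2.mem_mk_right _ _))

theorem IsHTriple.image {P : Finset (Chord (2 * n))}
    (hP : D.IsHTriple P) (g : Chord (2 * n) → Chord (2 * n')) (hg : Set.InjOn g P)
    (hmem : ∀ e ∈ P, g e ∈ D'.chords)
    (hcross : ∀ e ∈ P, ∀ f ∈ P, Chord.Crosses (g e) (g f) ↔ Chord.Crosses e f) :
    D'.IsHTriple (P.image g) := by
  classical
  obtain ⟨hcard, -, c, hc, hcen, hnot⟩ := hP
  refine ⟨by rw [Finset.card_image_of_injOn hg, hcard], Finset.forall_mem_image.2 hmem,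
    g c, Finset.mem_image_of_mem g hc, Finset.forall_mem_image.2 fun e he hne => ?_,
    Finset.forall_mem_image.2 fun a ha => Finset.forall_mem_image.2 fun b hb hac hbc hab => ?_⟩
  · exact (hcross c hc e he).2 (hcen e he (ne_of_apply_ne g hne))
  · rw [hcross a ha b hb]
    exact hnot a ha b hb (ne_of_apply_ne g hac) (ne_of_apply_ne g hbc) (ne_of_apply_ne g hab)

theorem ncard_isHTriple_eq_of_invOn {G : Set (Chord (2 * n))} (hG : G ⊆ D.chords)
    {ψ : Chord (2 * n) → Chord (2 * n')} {χ : Chord (2 * n') → Chord (2 * n)}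
    (hψ : Set.MapsTo ψ G D'.chords) (hχ : Set.MapsTo χ D'.chords G)
    (hinv : Set.InvOn χ ψ G D'.chords)
    (hcross : ∀ e ∈ G, ∀ f ∈ G, Chord.Crosses (ψ e) (ψ f) ↔ Chord.Crosses e f) :
    {P | D.IsHTriple P ∧ ∀ e ∈ P, e ∈ G}.ncard = D'.H := by
  classical
  have hχcross : ∀ a ∈ D'.chords, ∀ b ∈ D'.chords,
      Chord.Crosses (χ a) (χ b) ↔ Chord.Crosses a b := fun a ha b hb => by
    rw [← hcross _ (hχ ha) _ (hχ hb), hinv.2 ha, hinv.2 hb]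
  refine Set.ncard_congr (fun P _ => P.image ψ) ?_ ?_ ?_
  · rintro P ⟨hP, hPG⟩
    exact hP.image ψ (hinv.1.injOn.mono hPG) (fun e he => hψ (hPG e he))
      (fun e he f hf => hcross e (hPG e he) f (hPG f hf))
  · rintro P Q ⟨-, hPG⟩ ⟨-, hQG⟩ hPQ
    have hχψ : ∀ R : Finset (Chord (2 * n)), (∀ e ∈ R, e ∈ G) → (R.image ψ).image χ = R :=
      fun R hR => by
        rw [Finset.image_image, Finset.image_congr (f := χ ∘ ψ) (g := id)
          fun e he => hinv.1 (hR e he), Finset.image_id]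
    rw [← hχψ P hPG, hPQ, hχψ Q hQG]
  · intro Q hQ
    have hQmem := hQ.2.1
    refine ⟨Q.image χ, ⟨?_, Finset.forall_mem_image.2 fun e he => hχ (hQmem e he)⟩, ?_⟩
    · exact hQ.image χ (hinv.2.injOn.mono hQmem) (fun e he => hG (hχ (hQmem e he)))
        (fun a ha b hb => hχcross a (hQmem a ha) b (hQmem b hb))
    · rw [Finset.image_image, Finset.image_congr (f := ψ ∘ χ) (g := id)
        fun e he => hinv.2 (hQmem e he), Finset.image_id]

theorem DeletionOf.ncard_isHTriple_avoiding {S : Set (Chord (2 * n))}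
    (hdel : D.DeletionOf S D') : {P | D.IsHTriple P ∧ ∀ e ∈ P, e ∉ S}.ncard = D'.H := by
  classical
  obtain ⟨φ, hφ⟩ := hdel
  let G : Set (Chord (2 * n)) := {e | e ∈ D.chords ∧ e ∉ S}
  let ψ : Chord (2 * n) → Chord (2 * n') := fun e => if h : e ∈ G then φ ⟨e, h⟩ else s(0, 0)
  let χ : Chord (2 * n') → Chord (2 * n) :=
    fun e => if h : e ∈ D'.chords then φ.symm ⟨e, h⟩ else s(0, 0)
  have hψ : ∀ e (h : e ∈ G), ψ e = φ ⟨e, h⟩ := fun e h => dif_pos h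
  have hχ : ∀ e (h : e ∈ D'.chords), χ e = φ.symm ⟨e, h⟩ := fun e h => dif_pos h
  have := ncard_isHTriple_eq_of_invOn (G := G) (ψ := ψ) (χ := χ) (fun e he => he.1)
    (fun e he => hψ e he ▸ (φ _).2) (fun e he => hχ e he ▸ (φ.symm _).2)
    ⟨fun e he => by simp only [hψ e he, hχ _ (φ _).2, Subtype.coe_eta, Equiv.symm_apply_apply],
      fun e he => by simp only [hχ e he, hψ _ (φ.symm _).2, Subtype.coe_eta,
        Equiv.apply_symm_apply]⟩
    (fun e he f hf => by rw [hψ e he, hψ f hf]; exact (hφ _ _).symm)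
  rw [← this]
  congr 1
  ext P
  exact and_congr_right fun hP =>
    forall₂_congr fun e he => ⟨fun h => ⟨hP.2.1 e he, h⟩, And.right⟩

structure IsTwinPair (D : ChordDiagram n) (A B : Chord (2 * n)) : Prop where
  left_mem : A ∈ D.chords
  right_mem : B ∈ D.chords
  ne : A ≠ B
  not_crosses : ¬ Chord.Crosses A B
  crosses_iff : ∀ e ∈ D.chords, e ≠ A → e ≠ B → (Chord.Crosses A e ↔ Chord.Crosses B e)

namespace IsTwinPair

variable [NeZero (2 * n)] {A B : Chord (2 * n)} (h : D.IsTwinPair A B)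
include h

theorem not_crosses' : ¬ Chord.Crosses B A :=
  (crosses_comm h.right_mem h.left_mem).not.2 h.not_crosses

theorem crosses_left_iff (he : e ∈ D.chords) :
    Chord.Crosses A e ↔ Chord.Crosses B e := by
  by_cases heA : e = A
  · subst heA; simp only [Chord.not_crosses_self, h.not_crosses']
  by_cases heB : e = B
  · subst heB; simp only [Chord.not_crosses_self, h.not_crosses]
  exact h.crosses_iff e he heA heB

theorem crosses_right_iff (he : e ∈ D.chords) :
    Chord.Crosses e A ↔ Chord.Crosses e B := by
  rw [crosses_comm he h.left_mem, crosses_comm he h.right_mem, h.crosses_left_iff he]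

omit [NeZero (2 * n)] in
theorem swap_mem (he : e ∈ D.chords) : Equiv.swap A B e ∈ D.chords := by
  rw [Equiv.swap_apply_def]
  split_ifs
  exacts [h.right_mem, h.left_mem, he]

theorem crosses_swap_left_iff (hf : f ∈ D.chords) :
    Chord.Crosses (Equiv.swap A B e) f ↔ Chord.Crosses e f := by
  by_cases heA : e = A
  · rw [heA, Equiv.swap_apply_left, h.crosses_left_iff hf]
  by_cases heB : e = B
  · rw [heB, Equiv.swap_apply_right, h.crosses_left_iff hf]
  rw [Equiv.swap_apply_of_ne_of_ne heA heB]

theorem crosses_swap_right_iff (he : e ∈ D.chords) (hf : f ∈ D.chords) :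
    Chord.Crosses e (Equiv.swap A B f) ↔ Chord.Crosses e f := by
  rw [crosses_comm he (h.swap_mem hf), crosses_comm he hf, h.crosses_swap_left_iff he]

theorem crosses_swap_iff (he : e ∈ D.chords) (hf : f ∈ D.chords) :
    Chord.Crosses (Equiv.swap A B e) (Equiv.swap A B f) ↔ Chord.Crosses e f :=
  (h.crosses_swap_left_iff (h.swap_mem hf)).trans (h.crosses_swap_right_iff he hf)

theorem isHTriple_image_swap {P : Finset (Chord (2 * n))} (hP : D.IsHTriple P) :
    D.IsHTriple (P.image (Equiv.swap A B)) :=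
  hP.image _ (Equiv.injective _).injOn (fun e he => h.swap_mem (hP.2.1 e he))
    (fun e he f hf => h.crosses_swap_iff (hP.2.1 e he) (hP.2.1 f hf))

theorem ne_of_crosses (heA : Chord.Crosses e A) : e ≠ A ∧ e ≠ B :=
  ⟨fun h' => Chord.not_crosses_self A (h' ▸ heA), fun h' => h.not_crosses' (h' ▸ heA)⟩

theorem isHTriple_insert_insert (he : e ∈ D.chords)
    (heA : Chord.Crosses e A) : D.IsHTriple {A, B, e} := by
  obtain ⟨hne, hnf⟩ := h.ne_of_crosses heA
  refine ⟨Finset.card_eq_three.2 ⟨A, B, e, h.ne, hne.symm, hnf.symm, rfl⟩, ?_,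
    e, by simp, ?_, ?_⟩
  · simp only [Finset.mem_insert, Finset.mem_singleton]
    rintro f (rfl | rfl | rfl)
    exacts [h.left_mem, h.right_mem, he]
  · simp only [Finset.mem_insert, Finset.mem_singleton]
    rintro f (rfl | rfl | rfl) hf
    exacts [heA, (h.crosses_right_iff he).1 heA, (hf rfl).elim]
  · intro a ha b hb hae hbe hab
    simp only [Finset.mem_insert, Finset.mem_singleton, hae, hbe, or_false] at ha hb
    rcases ha with rfl | rfl <;> rcases hb with rfl | rfl
    exacts [(hab rfl).elim, h.not_crosses, h.not_crosses', (hab rfl).elim]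

theorem ncard_isHTriple_only_left_eq_only_right :
    {P | D.IsHTriple P ∧ A ∈ P ∧ B ∉ P}.ncard =
      {P | D.IsHTriple P ∧ B ∈ P ∧ A ∉ P}.ncard := by
  classical
  have hmem : ∀ {P : Finset (Chord (2 * n))} {x},
      x ∈ P.image (Equiv.swap A B) ↔ Equiv.swap A B x ∈ P := by
    simp [Equiv.swap_apply_eq_iff]
  refine Set.ncard_congr (fun P _ => P.image (Equiv.swap A B)) ?_ ?_ ?_
  · rintro P ⟨hP, hA, hB⟩
    refine ⟨h.isHTriple_image_swap hP, ?_, ?_⟩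
    · rwa [hmem, Equiv.swap_apply_right]
    · rwa [hmem, Equiv.swap_apply_left]
  · intro P Q _ _ hPQ
    exact Finset.image_injective (Equiv.injective _) hPQ
  · rintro Q ⟨hQ, hB, hA⟩
    refine ⟨Q.image (Equiv.swap A B), ⟨h.isHTriple_image_swap hQ, ?_, ?_⟩, ?_⟩
    · rwa [hmem, Equiv.swap_apply_left]
    · rwa [hmem, Equiv.swap_apply_right]
    · simp [Finset.image_image, Function.comp_def]

theorem ncard_isHTriple_mem_both :
    {P | D.IsHTriple P ∧ A ∈ P ∧ B ∈ P}.ncard =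
      {e | e ∈ D.chords ∧ Chord.Crosses e A}.ncard := by
  symm
  refine Set.ncard_congr (fun e _ => {A, B, e}) ?_ ?_ ?_
  · rintro e ⟨he, heA⟩
    exact ⟨h.isHTriple_insert_insert he heA, by simp, by simp⟩
  · rintro e f ⟨-, heA⟩ - hef
    have : e ∈ ({A, B, f} : Finset (Chord (2 * n))) := hef ▸ by simp
    obtain ⟨hne, hnf⟩ := h.ne_of_crosses heA
    simpa [hne, hnf] using this
  · rintro P ⟨⟨hcard, hmem, c, hc, hcen, -⟩, hA, hB⟩
    have hcA : c ≠ A := fun hcA => h.not_crosses (hcA ▸ hcen B hB (hcA ▸ h.ne.symm))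
    have hcB : c ≠ B := fun hcB => h.not_crosses' (hcB ▸ hcen A hA (hcB ▸ h.ne))
    have hcrA := hcen A hA hcA.symm
    refine ⟨c, ⟨hmem c hc, hcrA⟩, Finset.eq_of_subset_of_card_le ?_ ?_⟩
    · simp [Finset.insert_subset_iff, hA, hB, hc]
    · rw [hcard, (h.isHTriple_insert_insert (hmem c hc) hcrA).1]

theorem H_eq (hdel : D.DeletionOf {A, B} D') :
    D.H = D'.H + 2 * {P | D.IsHTriple P ∧ A ∈ P ∧ B ∉ P}.ncard +
      {e | e ∈ D.chords ∧ Chord.Crosses e A}.ncard := by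
  let T := {P | D.IsHTriple P}
  have hA := Set.ncard_inter_add_ncard_sdiff_eq_ncard T {P | A ∈ P}
  have hAB := Set.ncard_inter_add_ncard_sdiff_eq_ncard (T ∩ {P | A ∈ P}) {P | B ∈ P}
  have hnAB := Set.ncard_inter_add_ncard_sdiff_eq_ncard (T \ {P | A ∈ P}) {P | B ∈ P}
  have e0 : (T \ {P | A ∈ P}) \ {P | B ∈ P} =
      {P | D.IsHTriple P ∧ ∀ e ∈ P, e ∉ ({A, B} : Set (Chord (2 * n)))} := by
    ext P; simp [T, and_assoc, forall_and, imp_not_comm]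
  have e1 : (T ∩ {P | A ∈ P}) \ {P | B ∈ P} = {P | D.IsHTriple P ∧ A ∈ P ∧ B ∉ P} := by
    ext P; simp [T, and_assoc]
  have e2 : (T \ {P | A ∈ P}) ∩ {P | B ∈ P} = {P | D.IsHTriple P ∧ B ∈ P ∧ A ∉ P} := by
    ext P; simp [T]; tauto
  have e3 : T ∩ {P | A ∈ P} ∩ {P | B ∈ P} = {P | D.IsHTriple P ∧ A ∈ P ∧ B ∈ P} := by
    ext P; simp [T, and_assoc]
  rw [e0, hdel.ncard_isHTriple_avoiding, e2,
    ← h.ncard_isHTriple_only_left_eq_only_right] at hnAB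
  rw [e1, e3, h.ncard_isHTriple_mem_both] at hAB
  change T.ncard = _
  omega

end IsTwinPair

end ChordDiagram

theorem CyclicOrd4.isTwinPair {n : ℕ} [NeZero (2 * n)] {D : ChordDiagram n}
    {i j : ZMod (2 * n)} (hord : CyclicOrd4 i (i + 1) j (j + 1)) (hα : s(i, j + 1) ∈ D.chords)
    (hβ : s(i + 1, j) ∈ D.chords) : D.IsTwinPair s(i, j + 1) s(i + 1, j) where
  left_mem := hα
  right_mem := hβ
  ne hαβ := by
    obtain ⟨hi1, hj, -, -, -, -⟩ := hord.ne
    rcases Sym2.eq_iff.mp hαβ with ⟨h, -⟩ | ⟨h, -⟩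
    exacts [hi1 h.symm, hj h.symm]
  not_crosses := hord.not_crosses
  crosses_iff e he heα heβ := hord.crosses_iff_crosses fun x hxe hx => by
    simp only [Set.mem_insert_iff, Set.mem_singleton_iff] at hx
    rcases hx with rfl | rfl | rfl | rfl
    · exact heα (D.eq_of_mem_of_mem he hα hxe (Sym2.mem_mk_left _ _))
    · exact heβ (D.eq_of_mem_of_mem he hβ hxe (Sym2.mem_mk_left _ _))
    · exact heβ (D.eq_of_mem_of_mem he hβ hxe (Sym2.mem_mk_right _ _))
    · exact heα (D.eq_of_mem_of_mem he hα hxe (Sym2.mem_mk_right _ _))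

/-- deleting a strong RII pair `α = {i, j+1}`, `β = {i+1, j}` changes the
H-chord count by `k` modulo 2, where `k` is the number of chords of `D` crossing `α`;
in particular if `D` is evenly interlaced then `H(D) ≡ H(D') (mod 2)`. -/
theorem strong_RII_changes_H_by_even (n : ℕ) (D : ChordDiagram (n + 2)) (D' : ChordDiagram n)
    (i j : ZMod (2 * (n + 2)))
    (hord : CyclicOrd4 i (i + 1) j (j + 1))
    (hα : s(i, j + 1) ∈ D.chords) (hβ : s(i + 1, j) ∈ D.chords)
    (hdel : D.DeletionOf {s(i, j + 1), s(i + 1, j)} D')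
    (k : ℕ) (hk : k = Set.ncard {e | e ∈ D.chords ∧ Chord.Crosses e s(i, j + 1)}) :
    D.H ≡ D'.H + k [MOD 2] ∧
      (D.EvenlyInterlaced → D.H ≡ D'.H [MOD 2]) := by
  have hH := (hord.isTwinPair hα hβ).H_eq hdel
  rw [← hk] at hH
  have hmod : D.H ≡ D'.H + k [MOD 2] := by
    rw [hH, Nat.ModEq]
    omega
  refine ⟨hmod, fun heven => ?_⟩
  have hsymm : {f | f ∈ D.chords ∧ Chord.Crosses s(i, j + 1) f} =
      {e | e ∈ D.chords ∧ Chord.Crosses e s(i, j + 1)} :=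
    Set.ext fun f => and_congr_right fun hf => ChordDiagram.crosses_comm hα hf
  obtain ⟨t, rfl⟩ : Even k := hk ▸ hsymm ▸ heven _ hα
  rw [Nat.ModEq] at hmod ⊢
  omega
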